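/- Let G be a finite group whose group algebra kG is local, Λ a finite-dimensional algebra with G-action, and A = Λ*G. Let N be an A-module such that Ext^1_A(N, N) = 0. Then for every finite-dimensional G-module X, the A-module X ⊗_k^G N lies in add N; moreover kG ⊗_k^G N ≅ ⊕_S (S ⊗_k^G N) where S runs over the composition factors of kG, and the canonical map kG ⊗_k^G N → N splits. -/

import Mathlib

/-! Because `kG` is local, every nonzero finite-dimensional `G`-module `X` has a nonzero
`G`-invariant functional `f`: a fixed vector of the dual. (Take `v ≠ 0` with `kG · v` of minimal
dimension; if `(g - 1) v ≠ 0` then `v = r (g - 1) v`, but `1 - r (g - 1)` is a unit since its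
augmentation is `1`.) Contracting along `f` gives an exact sequence of `A`-modules
`0 → ker f ⊗_k^G N → X ⊗_k^G N → N → 0`. By induction on `dim X` the kernel is `N^(dim X - 1)`,
and rigidity of `N` propagates to `Ext¹(N, N^m) = 0`, so the sequence splits and
`X ⊗_k^G N ≅ N^(dim X)`. For `X = kG` and `f` the augmentation, the contraction is the canonical
map `kG ⊗_k^G N → N`, which therefore splits. -/

open scoped TensorProduct

universe u

/-- An axiomatization of the skew group algebra `A = Λ * G`. -/
structure SkewGroupAlgebra (k : Type u) [Field k] (Λ : Type u) [Ring Λ] [Algebra k Λ]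
    (G : Type u) [Group G] [Fintype G] (σ : G →* (Λ ≃ₐ[k] Λ))
    (A : Type u) [Ring A] [Algebra k A] : Type u where
  ι : Λ →ₐ[k] A
  u : G →* Aˣ
  skew_comm : ∀ (g : G) (r : Λ), (u g : A) * ι r = ι (σ g r) * (u g : A)
  repr_unique : ∀ a : A, ∃! c : G → Λ, a = ∑ g : G, ι (c g) * (u g : A)

/-- The old `Representation.ofMulAction k G H`, acting on `H →₀ k` by `Finsupp.lmapDomain`. -/
noncomputable def ofMulActionFinsupp (k G H : Type*) [CommSemiring k] [Monoid G] [MulAction G H] :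
    Representation k G (H →₀ k) where
  toFun g := Finsupp.lmapDomain k k (g • ·)
  map_one' := by
    ext x y
    simp
  map_mul' := by
    intro x y
    ext z w
    simp [mul_smul]

/-- `T` is (a realization of) the `A`-module `X ⊗_k^G N`. -/
structure IsGTensor {k Λ G A : Type u} [Field k] [Ring Λ] [Algebra k Λ]
    [Group G] [Fintype G] {σ : G →* (Λ ≃ₐ[k] Λ)} [Ring A] [Algebra k A]
    (S : SkewGroupAlgebra k Λ G σ A)
    (X : Type u) [AddCommGroup X] [Module k X] (ρ : Representation k G X)
    (N : Type u) [AddCommGroup N] [Module A N] [Module k N] [IsScalarTower k A N]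
    (T : Type u) [AddCommGroup T] [Module A T] : Type u where
  e : X ⊗[k] N ≃+ T
  smul_e : ∀ (r : Λ) (g : G) (x : X) (n : N),
    (S.ι r * (S.u g : A)) • e (x ⊗ₜ[k] n) = e (ρ g x ⊗ₜ[k] ((S.ι r * (S.u g : A)) • n))

/-- `Ext¹_A(N, K) = 0`, phrased as: every short exact sequence `0 → K → E → N → 0` splits. -/
def ExtensionsSplit (A : Type*) [Ring A] (K N : Type*) [AddCommGroup K] [Module A K]
    [AddCommGroup N] [Module A N] : Prop :=
  ∀ (E : Type u) [AddCommGroup E] [Module A E] (i : K →ₗ[A] E) (p : E →ₗ[A] N),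
    Function.Injective i → Function.Surjective p → Function.Exact i p →
    ∃ s : N →ₗ[A] E, p ∘ₗ s = LinearMap.id

namespace ExtensionsSplit

variable {A : Type*} [Ring A] {K K' N : Type*} [AddCommGroup K] [Module A K]
  [AddCommGroup K'] [Module A K'] [AddCommGroup N] [Module A N]

theorem of_subsingleton [Subsingleton K] : ExtensionsSplit.{u} A K N := by
  intro E _ _ i p _ hp hexact
  have hinj := (LinearMap.injective_iff_eq_zero_of_exact hexact).2 (Subsingleton.elim _ _)
  exact ⟨(LinearEquiv.ofBijective p ⟨hinj, hp⟩).symm.toLinearMap,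
    LinearMap.ext (LinearEquiv.ofBijective p ⟨hinj, hp⟩).apply_symm_apply⟩

theorem of_linearEquiv (h : ExtensionsSplit.{u} A K N) (e : K ≃ₗ[A] K') :
    ExtensionsSplit.{u} A K' N := fun E _ _ i p hi hp hexact =>
  h E (i ∘ₗ e.toLinearMap) p (hi.comp e.injective) hp (e.precomp_exact_iff_exact.2 hexact)

theorem exists_rightInverse_of_ker (h : ExtensionsSplit.{u} A K N) {E : Type u} [AddCommGroup E]
    [Module A E] {p : E →ₗ[A] N} (hp : Function.Surjective p) (e : LinearMap.ker p ≃ₗ[A] K) :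
    ∃ s : N →ₗ[A] E, p ∘ₗ s = LinearMap.id :=
  h.of_linearEquiv e.symm E (LinearMap.ker p).subtype p (Submodule.injective_subtype _) hp
    (LinearMap.exact_subtype_ker_map p)

theorem exists_rightInverse_of_quotient {E : Type u} [AddCommGroup E] [Module A E]
    {P : Submodule A E} (h : ExtensionsSplit.{u} A P N) {p : E →ₗ[A] N}
    (hP : P ≤ LinearMap.ker p) {s : N →ₗ[A] E ⧸ P} (hs : P.liftQ p hP ∘ₗ s = LinearMap.id) :
    ∃ s : N →ₗ[A] E, p ∘ₗ s = LinearMap.id := by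
  have hs' (n : N) : P.liftQ p hP (s n) = n := LinearMap.congr_fun hs n
  -- the pullback of `E → E ⧸ P` along `s` is an extension of `N` by `P`
  let E' := (LinearMap.range s).comap P.mkQ
  have hPE' : P ≤ E' := fun x hx =>
    ⟨0, by simpa using ((Submodule.Quotient.mk_eq_zero P).2 hx).symm⟩
  have hsurj : Function.Surjective (p ∘ₗ E'.subtype) := by
    intro n
    obtain ⟨x, hx⟩ := P.mkQ_surjective (s n)
    exact ⟨⟨x, n, hx.symm⟩, (congrArg (P.liftQ p hP) hx).trans (hs' n)⟩
  have hexact : Function.Exact (Submodule.inclusion hPE') (p ∘ₗ E'.subtype) := by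
    rintro ⟨x, m, hm⟩
    constructor
    · intro hpx
      have hm0 : m = 0 := by rw [← hs' m, hm]; exact hpx
      rw [hm0, map_zero, eq_comm, Submodule.mkQ_apply, Submodule.Quotient.mk_eq_zero] at hm
      exact ⟨⟨x, hm⟩, rfl⟩
    · rintro ⟨y, hy⟩
      rw [← hy]
      exact hP y.2
  obtain ⟨t, ht⟩ := h E' _ _ (Submodule.inclusion_injective hPE') hsurj hexact
  exact ⟨E'.subtype ∘ₗ t, by rw [← LinearMap.comp_assoc, ht]⟩

theorem prod {K₁ K₂ : Type*} [AddCommGroup K₁] [Module A K₁] [AddCommGroup K₂] [Module A K₂]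
    (h₁ : ExtensionsSplit.{u} A K₁ N) (h₂ : ExtensionsSplit.{u} A K₂ N) :
    ExtensionsSplit.{u} A (K₁ × K₂) N := by
  intro E _ _ i p hi hp hexact
  have hi₁ : Function.Injective (i ∘ₗ LinearMap.inl A K₁ K₂) := hi.comp LinearMap.inl_injective
  set P := LinearMap.range (i ∘ₗ LinearMap.inl A K₁ K₂)
  have hP : P ≤ LinearMap.ker p := by
    rintro _ ⟨x, rfl⟩
    exact hexact.apply_apply_eq_zero _
  have hmk (x : E) : P.mkQ x = 0 ↔ ∃ y, i (y, 0) = x := by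
    simp [P, Submodule.Quotient.mk_eq_zero]
  -- `E ⧸ i(K₁)` is an extension of `N` by `K₂`
  have hinj : Function.Injective (P.mkQ ∘ₗ i ∘ₗ LinearMap.inr A K₁ K₂) := by
    refine (injective_iff_map_eq_zero _).2 fun z hz => ?_
    obtain ⟨y, hy⟩ := (hmk _).1 hz
    exact (Prod.ext_iff.1 (hi hy)).2.symm
  have hexact' : Function.Exact (P.mkQ ∘ₗ i ∘ₗ LinearMap.inr A K₁ K₂) (P.liftQ p hP) := by
    intro q
    obtain ⟨x, rfl⟩ := P.mkQ_surjective q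
    constructor
    · intro hx
      obtain ⟨⟨y, z⟩, rfl⟩ := (hexact x).1 hx
      refine ⟨z, (sub_eq_zero.1 ?_)⟩
      rw [LinearMap.comp_apply, LinearMap.comp_apply, ← map_sub, hmk]
      exact ⟨-y, by rw [LinearMap.inr_apply, ← map_sub]; simp⟩
    · rintro ⟨z, hz⟩
      rw [← hz]
      exact hexact.apply_apply_eq_zero _
  obtain ⟨s, hs⟩ := h₂ (E ⧸ P) _ _ hinj (fun n => (hp n).elim fun x hx => ⟨P.mkQ x, hx⟩) hexact'
  exact (h₁.of_linearEquiv (LinearEquiv.ofInjective _ hi₁)).exists_rightInverse_of_quotient hP hs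

theorem pi_fin (h : ExtensionsSplit.{u} A N N) : ∀ n, ExtensionsSplit.{u} A (Fin n → N) N
  | 0 => of_subsingleton
  | n + 1 => (h.prod (pi_fin h n)).of_linearEquiv (Fin.consLinearEquiv A fun _ => N)

end ExtensionsSplit

open Module

section FixedVector

variable {k G : Type*} [Field k] [Group G]

theorem isUnit_one_sub_of_lift_eq_zero (hloc : IsLocalRing (MonoidAlgebra k G))
    {x : MonoidAlgebra k G} (hx : MonoidAlgebra.lift k k G 1 x = 0) : IsUnit (1 - x) := by
  refine (IsLocalRing.isUnit_or_isUnit_of_add_one (add_sub_cancel x 1)).resolve_left fun hu => ?_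
  simpa [hx] using hu.map (MonoidAlgebra.lift k k G 1)

variable {V : Type*} [AddCommGroup V] [Module k V] [FiniteDimensional k V]

theorem Representation.exists_ne_zero_forall_apply_eq (hloc : IsLocalRing (MonoidAlgebra k G))
    (ρ : Representation k G V) [Nontrivial V] : ∃ v : V, v ≠ 0 ∧ ∀ g, ρ g v = v := by
  let cyclic (v : V) : Submodule k V :=
    LinearMap.range (LinearMap.applyₗ v ∘ₗ ρ.asAlgebraHom.toLinearMap)
  have mem_cyclic {v x : V} : x ∈ cyclic v ↔ ∃ r, ρ.asAlgebraHom r v = x := by simp [cyclic]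
  obtain ⟨v, hv, hmin⟩ := (measure fun v => finrank k (cyclic v)).wf.has_min {v | v ≠ 0}
    (exists_ne 0)
  refine ⟨v, hv, fun g => by_contra fun hne => ?_⟩
  set a : MonoidAlgebra k G := MonoidAlgebra.single g 1 - 1
  have hav : ρ.asAlgebraHom a v = ρ g v - v := by simp [a]
  have hle : cyclic (ρ g v - v) ≤ cyclic v := by
    rintro _ ⟨r, rfl⟩
    exact mem_cyclic.2 ⟨r * a, by simp [← hav]⟩
  -- by minimality `kG · (g - 1) v = kG · v ∋ v`
  have heq : cyclic (ρ g v - v) = cyclic v := Submodule.eq_of_le_of_finrank_le hle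
    (not_lt.1 (hmin _ (sub_ne_zero.2 hne)))
  obtain ⟨r, hr⟩ := mem_cyclic.1 (heq ▸ mem_cyclic.2 ⟨1, by simp⟩ : v ∈ cyclic (ρ g v - v))
  have hunit : IsUnit (ρ.asAlgebraHom (1 - r * a)) :=
    (isUnit_one_sub_of_lift_eq_zero hloc (by simp [a])).map _
  refine hv ((map_eq_zero_iff _ (Module.End.isUnit_iff _ |>.1 hunit).1).1 ?_)
  rw [map_sub, map_one, map_mul, LinearMap.sub_apply, Module.End.one_apply,
    Module.End.mul_apply, hav, hr, sub_self]

theorem Representation.exists_dual_ne_zero_forall_apply_eq (hloc : IsLocalRing (MonoidAlgebra k G))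
    (ρ : Representation k G V) [Nontrivial V] :
    ∃ f : Dual k V, f ≠ 0 ∧ ∀ g x, f (ρ g x) = f x := by
  obtain ⟨f, hf, hfix⟩ := ρ.dual.exists_ne_zero_forall_apply_eq hloc
  refine ⟨f, hf, fun g x => ?_⟩
  simpa [Representation.dual_apply, Dual.transpose_apply] using LinearMap.congr_fun (hfix g⁻¹) x

end FixedVector

namespace IsGTensor

variable {k Λ G A : Type u} [Field k] [Ring Λ] [Algebra k Λ] [Group G] [Fintype G]
  {σ : G →* (Λ ≃ₐ[k] Λ)} [Ring A] [Algebra k A] {S : SkewGroupAlgebra k Λ G σ A}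
  {X : Type u} [AddCommGroup X] [Module k X] {ρ : Representation k G X}
  {N : Type u} [AddCommGroup N] [Module A N] [Module k N] [IsScalarTower k A N]
  {T : Type u} [AddCommGroup T] [Module A T]
  (hT : IsGTensor S X ρ N T) {f : X →ₗ[k] k}

noncomputable def contract (hf : ∀ g x, f (ρ g x) = f x) : T →ₗ[A] N where
  toFun t := TensorProduct.lid k N (f.rTensor N (hT.e.symm t))
  map_add' _ _ := by simp
  map_smul' a t := by
    obtain ⟨c, rfl, -⟩ := S.repr_unique a
    rw [← hT.e.apply_symm_apply t]
    simp only [Finset.sum_smul, map_sum, AddEquiv.symm_apply_apply, RingHom.id_apply]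
    refine Finset.sum_congr rfl fun g _ => ?_
    induction hT.e.symm t using TensorProduct.induction_on with
    | zero => simp
    | tmul x n => simp [hT.smul_e, hf, smul_comm (f x)]
    | add ξ η hξ hη => simp_all [smul_add]

theorem contract_apply_e (hf : ∀ g x, f (ρ g x) = f x) (x : X) (n : N) :
    hT.contract hf (hT.e (x ⊗ₜ n)) = f x • n := by
  simp [contract]

theorem contract_surjective (hf : ∀ g x, f (ρ g x) = f x) (hfs : Function.Surjective f) :
    Function.Surjective (hT.contract hf) := by
  obtain ⟨x, hx⟩ := hfs 1
  exact fun n => ⟨hT.e (x ⊗ₜ n), by simp [contract_apply_e, hx]⟩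

theorem eq_contract (hf : ∀ g x, f (ρ g x) = f x) (c : T →ₗ[A] N)
    (hc : ∀ x n, c (hT.e (x ⊗ₜ n)) = f x • n) : c = hT.contract hf := by
  ext t
  rw [← hT.e.apply_symm_apply t]
  induction hT.e.symm t using TensorProduct.induction_on with
  | zero => simp
  | tmul x n => rw [hc, contract_apply_e]
  | add ξ η hξ hη => simp only [map_add, hξ, hη]

/-- `ker f ⊗_k^G N` is realized by the kernel of `contract`, by right exactness of `- ⊗ N` and
flatness of `N` over the field `k`. -/
noncomputable def kerContract (hf : ∀ g x, f (ρ g x) = f x) (hfs : Function.Surjective f) :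
    IsGTensor S (LinearMap.ker f)
      (ρ.subrepresentation _ fun g x hx => by simp_all [LinearMap.mem_ker]) N
      (LinearMap.ker (hT.contract hf)) := by
  have hexact := rTensor_exact N (LinearMap.exact_subtype_ker_map f) hfs
  have hmem (ζ : LinearMap.ker f ⊗[k] N) :
      hT.e ((LinearMap.ker f).subtype.rTensor N ζ) ∈ LinearMap.ker (hT.contract hf) := by
    simp [contract, hexact.apply_apply_eq_zero]
  refine ⟨AddEquiv.ofBijective (AddMonoidHom.codRestrict
    (hT.e.toAddMonoidHom.comp ((LinearMap.ker f).subtype.rTensor N).toAddMonoidHom) _ hmem)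
    ⟨fun ζ η h => ?_, fun t => ?_⟩, fun r g x n => ?_⟩
  · exact Module.Flat.rTensor_preserves_injective_linearMap _ (Submodule.injective_subtype _)
      (hT.e.injective (congrArg Subtype.val h))
  · obtain ⟨ζ, hζ⟩ := (hexact _).1 (by simpa [contract] using t.2)
    exact ⟨ζ, Subtype.ext (by simp [hζ])⟩
  · apply Subtype.ext
    simp [hT.smul_e]

theorem nonempty_linearEquiv_pi (hloc : IsLocalRing (MonoidAlgebra k G))
    (hrigid : ExtensionsSplit.{u} A N N) [FiniteDimensional k X] (hT : IsGTensor S X ρ N T) :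
    Nonempty (T ≃ₗ[A] (Fin (finrank k X) → N)) := by
  induction h : finrank k X generalizing X T with
  | zero =>
    have : Subsingleton X := finrank_zero_iff.1 h
    have : Subsingleton T := hT.e.symm.injective.subsingleton
    exact ⟨LinearEquiv.ofSubsingleton _ _⟩
  | succ n ih =>
    have : Nontrivial X := nontrivial_of_finrank_eq_succ h
    obtain ⟨f, hf0, hf⟩ := ρ.exists_dual_ne_zero_forall_apply_eq hloc
    have hfs : Function.Surjective f := LinearMap.surjective_of_ne_zero hf0
    have hker : finrank k (LinearMap.ker f) = n := by
      have := f.finrank_range_add_finrank_ker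
      rw [LinearMap.range_eq_top.2 hfs, finrank_top, finrank_self] at this
      omega
    obtain ⟨eK⟩ := ih (hT.kerContract hf hfs) hker
    obtain ⟨s, hs⟩ :=
      (hrigid.pi_fin n).exists_rightInverse_of_ker (hT.contract_surjective hf hfs) eK
    exact ⟨((LinearMap.exact_subtype_ker_map _).splitSurjectiveEquiv
      (Submodule.injective_subtype _) ⟨s, hs⟩).1 ≪≫ₗ eK.prodCongr (LinearEquiv.refl A N) ≪≫ₗ
      LinearEquiv.prodComm A _ _ ≪≫ₗ Fin.consLinearEquiv A fun _ => N⟩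

theorem exists_rightInverse_of_regular (hloc : IsLocalRing (MonoidAlgebra k G))
    (hrigid : ExtensionsSplit.{u} A N N)
    (hT : IsGTensor S (G →₀ k) (ofMulActionFinsupp k G G) N T)
    (c : T →ₗ[A] N) (hc : ∀ g n, c (hT.e (Finsupp.single g 1 ⊗ₜ n)) = n) :
    ∃ s : N →ₗ[A] T, c ∘ₗ s = LinearMap.id := by
  let ε := Finsupp.linearCombination k fun _ : G => (1 : k)
  have hε (g : G) (x : G →₀ k) : ε (ofMulActionFinsupp k G G g x) = ε x :=
    Finsupp.linearCombination_mapDomain k _ _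
  have hεs : Function.Surjective ε := fun a => ⟨Finsupp.single 1 a, by simp [ε]⟩
  obtain rfl : c = hT.contract hε := hT.eq_contract hε c fun x n => by
    induction x using Finsupp.induction_linear with
    | zero => simp
    | add x y hx hy => simp [TensorProduct.add_tmul, hx, hy, add_smul]
    | single g a =>
      rw [← mul_one a, ← smul_eq_mul, ← Finsupp.smul_single, TensorProduct.smul_tmul, hc]
      simp [ε]
  obtain ⟨eK⟩ := (hT.kerContract hε hεs).nonempty_linearEquiv_pi hloc hrigid
  exact (hrigid.pi_fin _).exists_rightInverse_of_ker (hT.contract_surjective hε hεs) eK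

end IsGTensor

theorem gTensor_mem_add_of_local_rigid_general
    (k Λ G A : Type u) [Field k] [Ring Λ] [Algebra k Λ]
    [Group G] [Fintype G] (σ : G →* (Λ ≃ₐ[k] Λ)) [Ring A] [Algebra k A]
    (S : SkewGroupAlgebra k Λ G σ A)
    (hloc : IsLocalRing (MonoidAlgebra k G))
    (N : Type u) [AddCommGroup N] [Module A N] [Module k N] [IsScalarTower k A N]
    (hrigid : ∀ (E : Type u) [AddCommGroup E] [Module A E]
      (i : N →ₗ[A] E) (p : E →ₗ[A] N),
      Function.Injective i → Function.Surjective p → Function.Exact i p →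
      ∃ s : N →ₗ[A] E, p ∘ₗ s = LinearMap.id) :
    -- (1)
    (∀ (X : Type u) [AddCommGroup X] [Module k X] [FiniteDimensional k X]
      (ρ : Representation k G X) (T : Type u) [AddCommGroup T] [Module A T],
      IsGTensor S X ρ N T →
      ∃ (m : ℕ) (inj : T →ₗ[A] (Fin m → N)) (proj : (Fin m → N) →ₗ[A] T),
        proj ∘ₗ inj = LinearMap.id) ∧
    -- (2)
    (∀ (TkG Tk : Type u) [AddCommGroup TkG] [Module A TkG] [AddCommGroup Tk] [Module A Tk],
      IsGTensor S (G →₀ k) (ofMulActionFinsupp k G G) N TkG →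
      IsGTensor S k (Representation.trivial k (G := G) (V := k)) N Tk →
      Nonempty (TkG ≃ₗ[A] (Fin (Fintype.card G) → Tk))) ∧
    -- (3)
    (∀ (TkG : Type u) [AddCommGroup TkG] [Module A TkG]
      (hTkG : IsGTensor S (G →₀ k) (ofMulActionFinsupp k G G) N TkG)
      (c : TkG →ₗ[A] N),
      (∀ (g : G) (n : N), c (hTkG.e (Finsupp.single g (1 : k) ⊗ₜ[k] n)) = n) →
      ∃ s : N →ₗ[A] TkG, c ∘ₗ s = LinearMap.id) := by
  refine ⟨fun X _ _ _ ρ T _ _ hT => ?_, fun TkG Tk _ _ _ _ hTkG hTk => ?_,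
    fun TkG _ _ hTkG c hc => hTkG.exists_rightInverse_of_regular hloc hrigid c hc⟩
  · obtain ⟨e⟩ := hT.nonempty_linearEquiv_pi hloc hrigid
    exact ⟨_, e.toLinearMap, e.symm.toLinearMap, e.symm_comp⟩
  · obtain ⟨eG⟩ := hTkG.nonempty_linearEquiv_pi hloc hrigid
    obtain ⟨e₁⟩ := hTk.nonempty_linearEquiv_pi hloc hrigid
    rw [finrank_finsupp_self] at eG
    rw [finrank_self] at e₁
    exact ⟨eG ≪≫ₗ
      LinearEquiv.piCongrRight fun _ => (e₁ ≪≫ₗ LinearEquiv.funUnique (Fin 1) A N).symm⟩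

/-- Let `kG` be local and let `N` be a rigid `A`-module (every self-extension of `N`
splits).  Then:
(1) for every finite-dimensional `G`-module `X`, the module `X ⊗_k^G N` lies in `add N`;
(2) `kG ⊗_k^G N` is the direct sum of `S ⊗_k^G N` over the composition factors `S` of
`kG`, i.e. (`kG` being local with unique simple the trivial module `k_G`, occurring
`dim kG = |G|` times) it is isomorphic to `(k_G ⊗_k^G N)^{⊕ |G|}`;
(3) the canonical map `kG ⊗_k^G N → N`, `g ⊗ n ↦ n`, splits. -/
theorem gTensor_mem_add_of_local_rigid
    (k Λ G A : Type u) [Field k] [Ring Λ] [Algebra k Λ] [FiniteDimensional k Λ]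
    [Group G] [Fintype G] (σ : G →* (Λ ≃ₐ[k] Λ)) [Ring A] [Algebra k A]
    (S : SkewGroupAlgebra k Λ G σ A)
    (hloc : IsLocalRing (MonoidAlgebra k G))
    (N : Type u) [AddCommGroup N] [Module A N] [Module k N] [IsScalarTower k A N]
    (hrigid : ∀ (E : Type u) [AddCommGroup E] [Module A E]
      (i : N →ₗ[A] E) (p : E →ₗ[A] N),
      Function.Injective i → Function.Surjective p → Function.Exact i p →
      ∃ s : N →ₗ[A] E, p ∘ₗ s = LinearMap.id) :
    -- (1)
    (∀ (X : Type u) [AddCommGroup X] [Module k X] [FiniteDimensional k X]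
      (ρ : Representation k G X) (T : Type u) [AddCommGroup T] [Module A T],
      IsGTensor S X ρ N T →
      ∃ (m : ℕ) (inj : T →ₗ[A] (Fin m → N)) (proj : (Fin m → N) →ₗ[A] T),
        proj ∘ₗ inj = LinearMap.id) ∧
    -- (2)
    (∀ (TkG Tk : Type u) [AddCommGroup TkG] [Module A TkG] [AddCommGroup Tk] [Module A Tk],
      IsGTensor S (G →₀ k) (ofMulActionFinsupp k G G) N TkG →
      IsGTensor S k (Representation.trivial k (G := G) (V := k)) N Tk →
      Nonempty (TkG ≃ₗ[A] (Fin (Fintype.card G) → Tk))) ∧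
    -- (3)
    (∀ (TkG : Type u) [AddCommGroup TkG] [Module A TkG]
      (hTkG : IsGTensor S (G →₀ k) (ofMulActionFinsupp k G G) N TkG)
      (c : TkG →ₗ[A] N),
      (∀ (g : G) (n : N), c (hTkG.e (Finsupp.single g (1 : k) ⊗ₜ[k] n)) = n) →
      ∃ s : N →ₗ[A] TkG, c ∘ₗ s = LinearMap.id) :=
  gTensor_mem_add_of_local_rigid_general k Λ G A σ S hloc N hrigid
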